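/- For every integer m ≥ 0, π/2 = ln((5·F_{2m+1}² + √5·F_{2m+1}·√(5·F_{2m+1}² + 4) + 2)/2) − 4√5 · ∑_{n=0}^∞ (1/(4n+3)) · F_{(2m+1)(4n+3)} · (2 / (√5·F_{2m+1} + √(5·F_{2m+1}² + 4)))^{4n+3}, where the series on the right converges. -/

import Mathlib

open Real goldenRatio

lemma hasSum_aux_sub4 {z : ℝ} (h0 : 0 ≤ z) (h1 : z < 1) :
    HasSum (fun n : ℕ => z ^ (4 * n + 3) / (4 * (n : ℝ) + 3))
      ((Real.log ((1 + z) / (1 - z)) - 2 * Real.arctan z) / 4) := by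
  have habs : |z| < 1 := by rwa [abs_of_nonneg h0]
  have hA := Real.hasSum_log_sub_log_of_abs_lt_one habs
  have hB := Real.hasSum_arctan (x := z) (by rwa [Real.norm_eq_abs])
  have hC := (hA.mul_left (1/4)).sub (hB.mul_left (1/2))
  set g : ℕ → ℝ := fun k =>
    1/4 * (2 * (1 / (2 * (k:ℝ) + 1)) * z ^ (2 * k + 1)) -
    1/2 * ((-1) ^ k * z ^ (2 * k + 1) / (2 * (k:ℝ) + 1)) with hg
  have hC' : HasSum g ((Real.log (1 + z) - Real.log (1 - z)) / 4 - Real.arctan z / 2) := by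
    convert hC using 2 <;> first | rfl | (push_cast; ring)
  have hinj : Function.Injective (fun n : ℕ => 2 * n + 1) := fun a b h => by
    simpa using h
  have hvanish : ∀ x ∉ Set.range (fun n : ℕ => 2 * n + 1), g x = 0 := by
    intro x hx
    have hev : Even x := by
      rcases Nat.even_or_odd x with h | h
      · exact h
      · obtain ⟨r, hr⟩ := h
        exact absurd ⟨r, hr.symm⟩ hx
    have : (-1 : ℝ) ^ x = 1 := hev.neg_one_pow
    have hne : (2 * (x:ℝ) + 1) ≠ 0 := by positivity
    simp only [hg, this]
    field_simp
    ring
  have hD := (Function.Injective.hasSum_iff hinj hvanish).mpr hC'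
  have heq : (g ∘ fun n : ℕ => 2 * n + 1) =
      fun n : ℕ => z ^ (4 * n + 3) / (4 * (n : ℝ) + 3) := by
    funext n
    have hpow : (-1 : ℝ) ^ (2 * n + 1) = -1 := (Odd.neg_one_pow ⟨n, by ring⟩)
    have hexp : 2 * (2 * n + 1) + 1 = 4 * n + 3 := by ring
    have hne : (4 * (n:ℝ) + 3) ≠ 0 := by positivity
    simp only [Function.comp_apply, hg, hpow, hexp]
    push_cast
    field_simp
    ring
  rw [heq] at hD
  have hlog : Real.log ((1 + z) / (1 - z)) = Real.log (1 + z) - Real.log (1 - z) :=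
    Real.log_div (by linarith) (by linarith)
  rw [hlog]
  convert hD using 1
  ring

lemma termalg (C X S Nr : ℝ) (hC : C ≠ 0) (hS : S ≠ 0) (hN : Nr ≠ 0) :
    (C * X / Nr + C⁻¹ * X / Nr) / S = 1 / Nr * ((C + C⁻¹) / S) * X := by
  field_simp

lemma fib_odd_eq {j : ℕ} (hj : Odd j) :
    (Nat.fib j : ℝ) = (goldenRatio ^ j + (goldenRatio ^ j)⁻¹) / Real.sqrt 5 := by
  rw [Real.coe_fib_eq]
  have h1 : (goldenRatio ^ j)⁻¹ = -goldenConj ^ j := by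
    rw [← inv_pow, inv_goldenRatio, hj.neg_pow]
  rw [show goldenConj ^ j = -(goldenRatio ^ j)⁻¹ by rw [h1]; ring]
  ring_nf

set_option maxHeartbeats 1000000 in
theorem pi_div_two_fib_subseries (m : ℕ) :
    Summable
      (fun n : ℕ => 1 / (4 * (n : ℝ) + 3) *
        (Nat.fib ((2 * m + 1) * (4 * n + 3)) : ℝ) *
        (2 / (Real.sqrt 5 * (Nat.fib (2 * m + 1) : ℝ) +
          Real.sqrt (5 * (Nat.fib (2 * m + 1) : ℝ) ^ 2 + 4))) ^ (4 * n + 3)) ∧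
    Real.pi / 2 =
      Real.log ((5 * (Nat.fib (2 * m + 1) : ℝ) ^ 2 +
        Real.sqrt 5 * (Nat.fib (2 * m + 1) : ℝ) *
          Real.sqrt (5 * (Nat.fib (2 * m + 1) : ℝ) ^ 2 + 4) + 2) / 2) -
      4 * Real.sqrt 5 *
        ∑' n : ℕ, 1 / (4 * (n : ℝ) + 3) *
          (Nat.fib ((2 * m + 1) * (4 * n + 3)) : ℝ) *
          (2 / (Real.sqrt 5 * (Nat.fib (2 * m + 1) : ℝ) +
            Real.sqrt (5 * (Nat.fib (2 * m + 1) : ℝ) ^ 2 + 4))) ^ (4 * n + 3) := by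
  have h5pos : (0:ℝ) < Real.sqrt 5 := Real.sqrt_pos.mpr (by norm_num)
  have h5ne : Real.sqrt 5 ≠ 0 := ne_of_gt h5pos
  have h5sq : Real.sqrt 5 ^ 2 = 5 := Real.sq_sqrt (by norm_num)
  set k := 2 * m + 1 with hk
  have hkodd : Odd k := ⟨m, by omega⟩
  set F : ℝ := (Nat.fib k : ℝ) with hFdef
  set c : ℝ := goldenRatio ^ k with hcdef
  have hφ : (1:ℝ) < goldenRatio := one_lt_goldenRatio
  have hc1 : 1 < c := one_lt_pow₀ hφ (by omega)
  have hc0 : 0 < c := by linarith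
  have hcne : c ≠ 0 := ne_of_gt hc0
  set a : ℝ := Real.sqrt 5 * F with hadef
  have hfa : a = c + c⁻¹ := by
    rw [hadef, hFdef, fib_odd_eq hkodd, hcdef]
    field_simp
  have ha2 : a ^ 2 = 5 * F ^ 2 := by rw [hadef]; rw [mul_pow, h5sq]
  have ha0 : 0 < a := by
    rw [hfa]; positivity
  set s : ℝ := Real.sqrt (5 * F ^ 2 + 4) with hsdef
  have hs2 : s ^ 2 = a ^ 2 + 4 := by
    rw [hsdef, Real.sq_sqrt (by positivity), ha2]
  have hs0 : 0 ≤ s := Real.sqrt_nonneg _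
  have hsa : a < s := by nlinarith
  set y : ℝ := (a + s) / 2 with hydef
  have hy0 : 0 < y := by rw [hydef]; linarith
  have hyne : y ≠ 0 := ne_of_gt hy0
  have hysq : y ^ 2 = a * y + 1 := by rw [hydef]; nlinarith
  have hya : a < y := by rw [hydef]; linarith
  have ha1 : 1 < a := by
    rw [hfa]
    have : 0 < c⁻¹ := by positivity
    linarith
  have hy1 : 1 < y := by linarith
  set x : ℝ := y⁻¹ with hxdef
  have hx0 : 0 < x := by positivity
  have hx1 : x < 1 := by
    rw [hxdef]; exact inv_lt_one_of_one_lt₀ hy1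
  have hbase : 2 / (a + s) = x := by
    rw [hxdef, hydef, inv_div]
  set u : ℝ := c * x with hudef
  set v : ℝ := c⁻¹ * x with hvdef
  clear_value F c a s y x u v
  have hu0 : 0 ≤ u := by rw [hudef]; positivity
  have hv0 : 0 ≤ v := by rw [hvdef]; positivity
  have hcinv : 0 < c⁻¹ := by positivity
  have hca : c < a := by rw [hfa]; linarith
  have hu1 : u < 1 := by
    rw [hudef, hxdef, ← div_eq_mul_inv]
    exact (div_lt_one hy0).mpr (by linarith)
  have hv1 : v < 1 := by
    rw [hvdef, hxdef]
    have h1 : c⁻¹ < 1 := by rw [inv_lt_one_iff₀]; right; exact hc1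
    have h2 : y⁻¹ < 1 := inv_lt_one_of_one_lt₀ hy1
    nlinarith [inv_pos.mpr hc0, inv_pos.mpr hy0]
  have huv : u * v = x ^ 2 := by
    rw [hudef, hvdef]; field_simp
  have hsumuv : u + v = 1 - x ^ 2 := by
    have hay : a * y = y ^ 2 - 1 := by linarith [hysq]
    rw [hudef, hvdef, hxdef]
    have hcc : c * y⁻¹ + c⁻¹ * y⁻¹ = a * y⁻¹ := by rw [hfa]; ring
    rw [hcc]
    field_simp
    first
    | linear_combination hay
    | linear_combination (1 - y) * hay
    | linear_combination y * hay
  -- the series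
  have hu' := hasSum_aux_sub4 hu0 hu1
  have hv' := hasSum_aux_sub4 hv0 hv1
  have htot := (hu'.add hv').div_const (Real.sqrt 5)
  have hterm : (fun n : ℕ => (u ^ (4 * n + 3) / (4 * (n:ℝ) + 3) +
        v ^ (4 * n + 3) / (4 * (n:ℝ) + 3)) / Real.sqrt 5) =
      fun n : ℕ => 1 / (4 * (n : ℝ) + 3) * (Nat.fib (k * (4 * n + 3)) : ℝ) *
        (2 / (a + s)) ^ (4 * n + 3) := by
    funext n
    have hNodd : Odd (k * (4 * n + 3)) := hkodd.mul ⟨2 * n + 1, by ring⟩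
    have hfibN : (Nat.fib (k * (4 * n + 3)) : ℝ) =
        (c ^ (4 * n + 3) + (c ^ (4 * n + 3))⁻¹) / Real.sqrt 5 := by
      rw [fib_odd_eq hNodd, hcdef, ← pow_mul]
    have hNne : (4 * (n:ℝ) + 3) ≠ 0 := by positivity
    rw [hbase, hfibN, hudef, hvdef, mul_pow, mul_pow, inv_pow]
    exact termalg _ _ _ _ (pow_ne_zero _ hcne) h5ne hNne
  rw [hterm] at htot
  constructor
  · exact htot.summable
  · rw [htot.tsum_eq]
    have hYeq : (5 * F ^ 2 + a * s + 2) / 2 = y ^ 2 := by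
      rw [hydef]; linear_combination (-2 * ha2 - hs2) / 4
    rw [hYeq]
    have huvlt : u * v < 1 := by rw [huv]; nlinarith
    have harctan : Real.arctan u + Real.arctan v = Real.pi / 4 := by
      rw [Real.arctan_add huvlt]
      have hx2 : 1 - u * v ≠ 0 := by rw [huv]; nlinarith
      have : (u + v) / (1 - u * v) = 1 := by
        rw [hsumuv, huv]; exact div_self (by nlinarith)
      rw [this, Real.arctan_one]
    have hAne : (0:ℝ) < (1 + u) / (1 - u) := by
      apply div_pos <;> linarith
    have hBne : (0:ℝ) < (1 + v) / (1 - v) := by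
      apply div_pos <;> linarith
    have hlogsum : Real.log ((1 + u) / (1 - u)) + Real.log ((1 + v) / (1 - v)) =
        Real.log (y ^ 2) := by
      rw [← Real.log_mul (ne_of_gt hAne) (ne_of_gt hBne)]
      congr 1
      have h1 : (1 + u) * (1 + v) = 2 := by linear_combination hsumuv + huv
      have h2 : (1 - u) * (1 - v) = 2 * x ^ 2 := by linear_combination huv - hsumuv
      rw [div_mul_div_comm, h1, h2, hxdef]
      field_simp
    have hfin : 4 * Real.sqrt 5 *
        (((Real.log ((1 + u) / (1 - u)) - 2 * Real.arctan u) / 4 +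
          (Real.log ((1 + v) / (1 - v)) - 2 * Real.arctan v) / 4) / Real.sqrt 5) =
        Real.log (y ^ 2) - Real.pi / 2 := by
      have hstep : 4 * Real.sqrt 5 *
          (((Real.log ((1 + u) / (1 - u)) - 2 * Real.arctan u) / 4 +
            (Real.log ((1 + v) / (1 - v)) - 2 * Real.arctan v) / 4) / Real.sqrt 5) =
          (Real.log ((1 + u) / (1 - u)) + Real.log ((1 + v) / (1 - v))) -
            2 * (Real.arctan u + Real.arctan v) := by
        field_simp
        ring
      rw [hstep, hlogsum, harctan]
      ring
    rw [hfin]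
    ring
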